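/- (Perturbation bound, inductive form) Under the assumptions ‖U_j‖₂ ≤ ‖W_j‖₂/d for all j, the layerwise error Δ_i = |f^i_{w+u}(x) − f^i_w(x)|₂ satisfies Δ_i ≤ (1 + 1/d)^i · (∏_{j=1}^i ‖W_j‖₂) · |x|₂ · ∑_{j=1}^i ‖U_j‖₂/‖W_j‖₂ for every 0 ≤ i ≤ d. -/

import Mathlib

/-- Coordinatewise ReLU on vectors. -/
noncomputable def reluV {n : ℕ} (v : EuclideanSpace ℝ (Fin n)) :
    EuclideanSpace ℝ (Fin n) := WithLp.toLp 2 (fun i => max (v i) 0)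

/-- `net W i x` is the output f^i(x) of layer `i` before activation (layers are
    indexed 1,…,d): f¹(x) = W₁ x, f^{i+1}(x) = W_{i+1} φ(f^i(x)); `net W 0 x = x`. -/
noncomputable def net {n : ℕ}
    (W : ℕ → EuclideanSpace ℝ (Fin n) →L[ℝ] EuclideanSpace ℝ (Fin n)) :
    ℕ → EuclideanSpace ℝ (Fin n) → EuclideanSpace ℝ (Fin n)
  | 0, x => x
  | 1, x => W 1 x
  | (i + 2), x => W (i + 2) (reluV (net W (i + 1) x))

open Finset

/-! The error `Δᵢ` obeys `Δᵢ₊₁ ≤ (‖Wᵢ₊₁‖ + ‖Uᵢ₊₁‖) Δᵢ + ‖Uᵢ₊₁‖ ‖f^i_w(x)‖`, because ReLU is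
1-Lipschitz and fixes `0`; with `‖Uᵢ₊₁‖ ≤ ‖Wᵢ₊₁‖ / d` and `‖f^i_w(x)‖ ≤ (∏_{j ≤ i} ‖W_j‖) ‖x‖`
this is a linear recursion whose solution is the claimed bound. -/

theorem euclidean_norm_le_of_forall_abs_le {ι : Type*} [Fintype ι] {a b : EuclideanSpace ℝ ι}
    (h : ∀ i, |a i| ≤ |b i|) : ‖a‖ ≤ ‖b‖ := by
  simp only [EuclideanSpace.norm_eq, Real.norm_eq_abs]
  exact Real.sqrt_le_sqrt (sum_le_sum fun i _ => pow_le_pow_left₀ (abs_nonneg _) (h i) 2)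

theorem norm_reluV_sub_reluV_le {n : ℕ} (a b : EuclideanSpace ℝ (Fin n)) :
    ‖reluV a - reluV b‖ ≤ ‖a - b‖ :=
  euclidean_norm_le_of_forall_abs_le fun i => by
    simpa [reluV] using abs_max_sub_max_le_abs (a i) (b i) 0

theorem norm_reluV_le {n : ℕ} (a : EuclideanSpace ℝ (Fin n)) : ‖reluV a‖ ≤ ‖a‖ :=
  euclidean_norm_le_of_forall_abs_le fun i => by
    simpa [reluV] using abs_max_sub_max_le_abs (a i) 0 0

theorem norm_add_apply_sub_apply_le {E F : Type*} [SeminormedAddCommGroup E]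
    [SeminormedAddCommGroup F] [NormedSpace ℝ E] [NormedSpace ℝ F] (W U : E →L[ℝ] F) (a b : E) :
    ‖(W + U) a - W b‖ ≤ (‖W‖ + ‖U‖) * ‖a - b‖ + ‖U‖ * ‖b‖ := by
  have h : (W + U) a - W b = (W + U) (a - b) + U b := by
    simp only [map_sub, add_apply]
    abel
  calc ‖(W + U) a - W b‖ ≤ ‖W + U‖ * ‖a - b‖ + ‖U‖ * ‖b‖ := by
        rw [h]
        exact (norm_add_le _ _).trans (add_le_add ((W + U).le_opNorm _) (U.le_opNorm _))
    _ ≤ (‖W‖ + ‖U‖) * ‖a - b‖ + ‖U‖ * ‖b‖ := by gcongr; exact norm_add_le W U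

section Network

variable {n : ℕ} (W U : ℕ → EuclideanSpace ℝ (Fin n) →L[ℝ] EuclideanSpace ℝ (Fin n))
  (x : EuclideanSpace ℝ (Fin n))

theorem norm_net_le (i : ℕ) : ‖net W i x‖ ≤ (∏ j ∈ Icc 1 i, ‖W j‖) * ‖x‖ := by
  induction i with
  | zero => simp [net]
  | succ i ih =>
    rw [prod_Icc_succ_top (by omega), mul_right_comm]
    rcases i with _ | i
    · simpa [net, mul_comm] using (W 1).le_opNorm x
    · calc ‖net W (i + 2) x‖ ≤ ‖W (i + 2)‖ * ‖net W (i + 1) x‖ :=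
            ((W _).le_opNorm _).trans (by gcongr; exact norm_reluV_le _)
        _ ≤ _ := by rw [mul_comm]; gcongr

theorem norm_net_add_sub_net_succ_le (i : ℕ) :
    ‖net (fun j => W j + U j) (i + 1) x - net W (i + 1) x‖ ≤
      (‖W (i + 1)‖ + ‖U (i + 1)‖) * ‖net (fun j => W j + U j) i x - net W i x‖ +
        ‖U (i + 1)‖ * ‖net W i x‖ := by
  rcases i with _ | i
  · exact norm_add_apply_sub_apply_le (W 1) (U 1) x x
  · refine (norm_add_apply_sub_apply_le (W (i + 2)) (U (i + 2)) _ _).trans ?_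
    gcongr
    · exact norm_reluV_sub_reluV_le _ _
    · exact norm_reluV_le _

end Network

theorem le_pow_mul_prod_mul_sum_div_of_le_step {N : ℕ} {c X : ℝ} {w u Δ : ℕ → ℝ}
    (hc : 1 ≤ c) (hX : 0 ≤ X) (hw : ∀ j ∈ Icc 1 N, 0 < w j) (hu : ∀ j ∈ Icc 1 N, 0 ≤ u j)
    (hΔ : Δ 0 = 0)
    (hstep : ∀ i < N, Δ (i + 1) ≤ c * w (i + 1) * Δ i + u (i + 1) * (∏ j ∈ Icc 1 i, w j) * X) :
    ∀ i ≤ N, Δ i ≤ c ^ i * (∏ j ∈ Icc 1 i, w j) * X * ∑ j ∈ Icc 1 i, u j / w j := by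
  intro i
  induction i with
  | zero => simp [hΔ]
  | succ i ih =>
    intro hi
    have hmem : i + 1 ∈ Icc 1 N := mem_Icc.2 ⟨by omega, hi⟩
    have hwi := hw _ hmem
    have hP : 0 ≤ ∏ j ∈ Icc 1 i, w j :=
      prod_nonneg fun j hj => (hw j (by simp only [mem_Icc] at hj ⊢; omega)).le
    rw [prod_Icc_succ_top (by omega), sum_Icc_succ_top (by omega)]
    calc Δ (i + 1) ≤ c * w (i + 1) * Δ i + u (i + 1) * (∏ j ∈ Icc 1 i, w j) * X := hstep i hi
      _ ≤ c * w (i + 1) * (c ^ i * (∏ j ∈ Icc 1 i, w j) * X * ∑ j ∈ Icc 1 i, u j / w j) +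
            c ^ (i + 1) * (u (i + 1) * (∏ j ∈ Icc 1 i, w j) * X) := by
          have hcw : 0 ≤ c * w (i + 1) := by positivity
          have huPX : 0 ≤ u (i + 1) * (∏ j ∈ Icc 1 i, w j) * X := by
            have := hu _ hmem
            positivity
          exact add_le_add (mul_le_mul_of_nonneg_left (ih (by omega)) hcw)
            (le_mul_of_one_le_left huPX (one_le_pow₀ hc))
      _ = _ := by field_simp; ring

theorem perturbation_bound_inductive_general (n d : ℕ)
    (W U : ℕ → EuclideanSpace ℝ (Fin n) →L[ℝ] EuclideanSpace ℝ (Fin n))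
    (hW : ∀ j ∈ Finset.Icc 1 d, 0 < ‖W j‖)
    (hU : ∀ j ∈ Finset.Icc 1 d, ‖U j‖ ≤ ‖W j‖ / d)
    (x : EuclideanSpace ℝ (Fin n)) :
    ∀ i ≤ d,
      ‖net (fun j => W j + U j) i x - net W i x‖ ≤
        (1 + 1 / (d : ℝ)) ^ i * (∏ j ∈ Finset.Icc 1 i, ‖W j‖) * ‖x‖ *
          ∑ j ∈ Finset.Icc 1 i, ‖U j‖ / ‖W j‖ := by
  refine le_pow_mul_prod_mul_sum_div_of_le_step (by simp) (norm_nonneg x) hW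
    (fun j _ => norm_nonneg (U j)) (by simp [net]) fun i hi => ?_
  have hmem : i + 1 ∈ Icc 1 d := mem_Icc.2 ⟨by omega, hi⟩
  have hsum : ‖W (i + 1)‖ + ‖U (i + 1)‖ ≤ (1 + 1 / (d : ℝ)) * ‖W (i + 1)‖ := by
    linarith [hU _ hmem, show (1 + 1 / (d : ℝ)) * ‖W (i + 1)‖ = ‖W (i + 1)‖ + ‖W (i + 1)‖ / d by ring]
  refine (norm_net_add_sub_net_succ_le W U x i).trans (add_le_add ?_ ?_)
  · exact mul_le_mul_of_nonneg_right hsum (norm_nonneg _)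
  · rw [mul_assoc]
    exact mul_le_mul_of_nonneg_left (norm_net_le W x i) (norm_nonneg _)

/-- Perturbation bound, inductive form: under ‖U_j‖₂ ≤ ‖W_j‖₂/d,
    the layerwise error Δ_i = |f^i_{w+u}(x) − f^i_w(x)|₂ satisfies
    Δ_i ≤ (1+1/d)^i · (∏_{j=1}^i ‖W_j‖₂) · |x|₂ · ∑_{j=1}^i ‖U_j‖₂/‖W_j‖₂
    for every 0 ≤ i ≤ d. -/
theorem perturbation_bound_inductive (n d : ℕ) (hd : 1 ≤ d)
    (W U : ℕ → EuclideanSpace ℝ (Fin n) →L[ℝ] EuclideanSpace ℝ (Fin n))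
    (hW : ∀ j ∈ Finset.Icc 1 d, 0 < ‖W j‖)
    (hU : ∀ j ∈ Finset.Icc 1 d, ‖U j‖ ≤ ‖W j‖ / d)
    (x : EuclideanSpace ℝ (Fin n)) :
    ∀ i ≤ d,
      ‖net (fun j => W j + U j) i x - net W i x‖ ≤
        (1 + 1 / (d : ℝ)) ^ i * (∏ j ∈ Finset.Icc 1 i, ‖W j‖) * ‖x‖ *
          ∑ j ∈ Finset.Icc 1 i, ‖U j‖ / ‖W j‖ :=
  perturbation_bound_inductive_general n d W U hW hU x
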